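/- Let A be a complex Banach algebra, s a fixed nonzero complex number with |s| < 1, r > 2 a real number, and θ ≥ 0. Suppose f : A³ → A satisfies f(x, 0, a) = f(0, z, a) = f(x, z, 0) = 0 for all x, z, a ∈ A and, for all λ, μ, η ∈ T¹ and all x, y, z, w, a, b ∈ A, ‖2f(λ(x+y)/2, μ(z−w), η(a+b)) + 2f(λ(x−y)/2, μ(z+w), η(a−b)) − λμη(2f(x,z,a) − 2f(x,w,b) + 2f(y,z,b) − 2f(y,w,a))‖ ≤ ‖s · D₁f(x, y, z, w, a, b)‖ + θ(‖x‖^r + ‖y‖^r)(‖z‖^r + ‖w‖^r)(‖a‖^r + ‖b‖^r). Then there exists a unique ℂ-trilinear mapping D : A³ → A such that ‖f(x, z, a) − D(x, z, a)‖ ≤ (2^r θ/(2(2^r − 2))) ‖x‖^r ‖z‖^r ‖a‖^r for all x, z, a ∈ A. If, in addition, f satisfies ‖f(xy, z, a) − f(x, z, a)y − x f(y, z, a)‖ ≤ θ(‖x‖^r + ‖y‖^r)‖z‖^r ‖a‖^r for all x, y, z, a ∈ A, and ‖f(x_{σ(1)}, x_{σ(2)}, x_{σ(3)}) − f(x₁,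 x₂, x₃)‖ ≤ θ ‖x₁‖^r ‖x₂‖^r ‖x₃‖^r for all x₁, x₂, x₃ ∈ A and every permutation (σ(1), σ(2), σ(3)) of (1,2,3), then D is a permuting triderivation. -/

import Mathlib

/-- A mapping `f : X³ → Y` is *tri-additive* if it is additive in each variable. -/
def TriAdditive {X Y : Type*} [AddCommGroup X] [AddCommGroup Y]
    (f : X → X → X → Y) : Prop :=
  (∀ x x' z a : X, f (x + x') z a = f x z a + f x' z a) ∧
  (∀ x z z' a : X, f x (z + z') a = f x z a + f x z' a) ∧
  (∀ x z a a' : X, f x z (a + a') = f x z a + f x z a')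

/-- A mapping `f : X³ → Y` is *ℂ-trilinear* if it is ℂ-linear in each variable. -/
def CTrilinear {X Y : Type*} [AddCommGroup X] [Module ℂ X] [AddCommGroup Y] [Module ℂ Y]
    (f : X → X → X → Y) : Prop :=
  TriAdditive f ∧
  (∀ (c : ℂ) (x z a : X), f (c • x) z a = c • f x z a) ∧
  (∀ (c : ℂ) (x z a : X), f x (c • z) a = c • f x z a) ∧
  (∀ (c : ℂ) (x z a : X), f x z (c • a) = c • f x z a)

/-- `D₁f(x, y, z, w, a, b)`. -/
def D₁ {X Y : Type*} [AddCommGroup X] [Module ℂ X] [AddCommGroup Y] [Module ℂ Y]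
    (f : X → X → X → Y) (x y z w a b : X) : Y :=
  f (x + y) (z - w) (a + b) + f (x - y) (z + w) (a - b)
    - (2 : ℂ) • f x z a + (2 : ℂ) • f x w b - (2 : ℂ) • f y z b + (2 : ℂ) • f y w a

/-- `D₂f(x, y, z, w, a, b)`. -/
noncomputable def D₂ {X Y : Type*} [AddCommGroup X] [Module ℂ X] [AddCommGroup Y] [Module ℂ Y]
    (f : X → X → X → Y) (x y z w a b : X) : Y :=
  (2 : ℂ) • f ((2 : ℂ)⁻¹ • (x + y)) (z - w) (a + b)
    + (2 : ℂ) • f ((2 : ℂ)⁻¹ • (x - y)) (z + w) (a - b)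
    - (2 : ℂ) • f x z a + (2 : ℂ) • f x w b - (2 : ℂ) • f y z b + (2 : ℂ) • f y w a


/-- A ℂ-trilinear `D : A³ → A` is a *permuting triderivation* if it is a derivation in the
first variable and is invariant under every permutation of its three variables. -/
def PermutingTriderivation {A : Type*} [Ring A] [Module ℂ A]
    (D : A → A → A → A) : Prop :=
  CTrilinear D ∧
  (∀ x y z w : A, D (x * y) z w = D x z w * y + x * D y z w) ∧
  (∀ (σ : Equiv.Perm (Fin 3)) (x : Fin 3 → A),
    D (x (σ 0)) (x (σ 1)) (x (σ 2)) = D (x 0) (x 1) (x 2))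

variable {A : Type*} [NormedRing A] [NormedAlgebra ℂ A] [CompleteSpace A]

/-!
Hyers' direct method. Taking `y = w = b = 0` in the inequality gives
`‖2 f(x/2, z, a) - f(x, z, a)‖ ≤ θ/2 ‖x‖^r ‖z‖^r ‖a‖^r`, so `2ⁿ f(2⁻ⁿ x, z, a)` is Cauchy with
ratio `2^(1-r) < 1`, and its limit `D` lies within `2^r θ / (2(2^r - 2)) ‖x‖^r ‖z‖^r ‖a‖^r` of `f`.
In the limit the θ-term of the inequality disappears: as `‖s‖ < 1` this forces `D₁ D = 0`, and
with unimodular scalars it gives `D(λx, μz, ηa) = λμη D(x, z, a)`. The first identity is Jensen's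
equation in each variable, hence additivity; the second upgrades additivity to ℂ-linearity,
because every complex number is an integer multiple of a sum of two unimodular ones.

Two trilinear maps close to `f` agree, since their difference is homogeneous of degree one in `x`
but bounded by a multiple of `‖x‖^r` with `r > 1`. The same rescaling turns the approximate Leibniz
rule and the approximate symmetry of `f` into exact identities for `D`, the errors decaying like
`(2^(2-r))ⁿ` and `(2^(1-r))^(3n)`.
-/

open Filter Topology

theorem Complex.exists_norm_eq_one_add_eq {c : ℂ} (hc : ‖c‖ ≤ 2) :
    ∃ l₁ l₂ : ℂ, ‖l₁‖ = 1 ∧ ‖l₂‖ = 1 ∧ l₁ + l₂ = c := by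
  obtain ⟨φ, hφ⟩ : ∃ φ : ℝ, 2 * Real.cos φ = ‖c‖ :=
    ⟨Real.arccos (‖c‖ / 2), by
      rw [Real.cos_arccos (by linarith [norm_nonneg c]) (by linarith)]; ring⟩
  refine ⟨exp ((c.arg + φ : ℝ) * I), exp ((c.arg - φ : ℝ) * I),
    norm_exp_ofReal_mul_I _, norm_exp_ofReal_mul_I _, ?_⟩
  calc _ = (exp (φ * I) + exp (-φ * I)) * exp (c.arg * I) := by
        rw [add_mul, ← exp_add, ← exp_add]
        push_cast
        ring_nf
    _ = (2 * Real.cos φ : ℝ) * exp (c.arg * I) := by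
        push_cast
        rw [two_cos]
    _ = c := by rw [hφ, norm_mul_exp_arg_mul_I]

theorem map_smul_of_map_unit_smul {X Y : Type*} [AddCommGroup X] [Module ℂ X] [AddCommGroup Y]
    [Module ℂ Y] (g : X →+ Y) (h : ∀ l : ℂ, ‖l‖ = 1 → ∀ u, g (l • u) = l • g u)
    (c : ℂ) (u : X) : g (c • u) = c • g u := by
  obtain ⟨n, hn⟩ := exists_nat_gt ‖c‖
  have hn₀ : (0 : ℝ) < n := (norm_nonneg c).trans_lt hn
  obtain ⟨l₁, l₂, h₁, h₂, hsum⟩ := Complex.exists_norm_eq_one_add_eq (c := c / n) (by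
    rw [norm_div, Complex.norm_natCast, div_le_iff₀ hn₀]; linarith)
  have hc : c = (n : ℂ) * (l₁ + l₂) := by
    rw [hsum, mul_div_cancel₀ _ (by exact_mod_cast hn₀.ne')]
  rw [hc, mul_smul, mul_smul, Nat.cast_smul_eq_nsmul, Nat.cast_smul_eq_nsmul, map_nsmul,
    add_smul, add_smul, map_add, h l₁ h₁, h l₂ h₂]

theorem map_add_of_jensen {X Y : Type*} [AddCommGroup X] [AddCommGroup Y] [Module ℂ Y]
    {g : X → Y} (h₀ : g 0 = 0) (hJ : ∀ u v, g (u + v) + g (u - v) = (2 : ℂ) • g u) (u v : X) :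
    g (u + v) = g u + g v := by
  have hodd : ∀ t, g (-t) = -g t := fun t => by
    have := hJ 0 t
    rw [zero_add, zero_sub, h₀, smul_zero] at this
    exact eq_neg_of_add_eq_zero_right this
  have h₁ := hJ u v
  have h₂ := hJ v u
  rw [add_comm v u, ← neg_sub u v, hodd] at h₂
  refine smul_right_injective Y (two_ne_zero (α := ℂ)) ?_
  show (2 : ℂ) • g (u + v) = (2 : ℂ) • (g u + g v)
  rw [smul_add, ← h₁, ← h₂, two_smul]
  abel

theorem two_rpow_one_sub_lt_one {r : ℝ} (hr : 1 < r) : (2 : ℝ) ^ (1 - r) < 1 :=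
  Real.rpow_lt_one_of_one_lt_of_neg one_lt_two (by linarith)

theorem eq_zero_of_tendsto_of_norm_le_geometric {E : Type*} [NormedAddCommGroup E] {u : ℕ → E}
    {a : E} {C q : ℝ} (hu : Tendsto u atTop (𝓝 a)) (hq₀ : 0 ≤ q) (hq : q < 1)
    (h : ∀ n, ‖u n‖ ≤ C * q ^ n) : a = 0 := by
  have := le_of_tendsto_of_tendsto' hu.norm
    ((tendsto_pow_atTop_nhds_zero_of_lt_one hq₀ hq).const_mul C) h
  simpa using this

theorem ctrilinear_of_D₁_eq_zero {X Y : Type*} [AddCommGroup X] [Module ℂ X] [AddCommGroup Y]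
    [Module ℂ Y] {D : X → X → X → Y} (hD₁ : ∀ x y z w a b, D₁ D x y z w a b = 0)
    (hunit : ∀ l m e : ℂ, ‖l‖ = 1 → ‖m‖ = 1 → ‖e‖ = 1 → ∀ x z a,
      D (l • x) (m • z) (e • a) = (l * m * e) • D x z a) :
    CTrilinear D := by
  -- `-1` is unimodular, so `D` is odd in each variable.
  have neg_one : ‖(-1 : ℂ)‖ = 1 := by simp
  have eq_zero_of_eq_neg : ∀ v : Y, v = -v → v = 0 := fun v hv =>
    (smul_eq_zero.mp (show (2 : ℂ) • v = 0 by
      rw [two_smul]; nth_rewrite 2 [hv]; exact add_neg_cancel v)).resolve_left two_ne_zero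
  have h₁ : ∀ z a, D 0 z a = 0 := fun z a => eq_zero_of_eq_neg _ <| by
    simpa using hunit (-1) 1 1 neg_one norm_one norm_one 0 z a
  have h₂ : ∀ x a, D x 0 a = 0 := fun x a => eq_zero_of_eq_neg _ <| by
    simpa using hunit 1 (-1) 1 norm_one neg_one norm_one x 0 a
  have h₃ : ∀ x z, D x z 0 = 0 := fun x z => eq_zero_of_eq_neg _ <| by
    simpa using hunit 1 1 (-1) norm_one norm_one neg_one x z 0
  have add₁ : ∀ z a u v, D (u + v) z a = D u z a + D v z a := fun z a =>
    map_add_of_jensen (g := fun t => D t z a) (h₁ z a) fun u v => by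
      simpa [D₁, h₁, h₂, h₃, sub_eq_zero] using hD₁ u v z 0 a 0
  have add₂ : ∀ x a u v, D x (u + v) a = D x u a + D x v a := fun x a =>
    map_add_of_jensen (g := fun t => D x t a) (h₂ x a) fun u v => by
      simpa [D₁, h₁, h₂, h₃, sub_eq_zero, add_comm] using hD₁ x 0 u v a 0
  have add₃ : ∀ x z u v, D x z (u + v) = D x z u + D x z v := fun x z =>
    map_add_of_jensen (g := fun t => D x z t) (h₃ x z) fun u v => by
      simpa [D₁, h₁, h₂, h₃, sub_eq_zero] using hD₁ x 0 z 0 u v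
  refine ⟨⟨fun x x' z a => add₁ z a x x', fun x z z' a => add₂ x a z z',
    fun x z a a' => add₃ x z a a'⟩, fun c x z a => ?_, fun c x z a => ?_, fun c x z a => ?_⟩
  · exact map_smul_of_map_unit_smul (AddMonoidHom.mk' (fun t => D t z a) (add₁ z a))
      (fun l hl u => by simpa using hunit l 1 1 hl norm_one norm_one u z a) c x
  · exact map_smul_of_map_unit_smul (AddMonoidHom.mk' (fun t => D x t a) (add₂ x a))
      (fun m hm u => by simpa using hunit 1 m 1 norm_one hm norm_one x u a) c z
  · exact map_smul_of_map_unit_smul (AddMonoidHom.mk' (fun t => D x z t) (add₃ x z))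
      (fun e he u => by simpa using hunit 1 1 e norm_one norm_one he x z u) c a

theorem D₂_eq_D₁_of_map_inv_two_smul {X Y : Type*} [AddCommGroup X] [Module ℂ X]
    [AddCommGroup Y] [Module ℂ Y] {D : X → X → X → Y}
    (hD : ∀ x z a, D ((2 : ℂ)⁻¹ • x) z a = (2 : ℂ)⁻¹ • D x z a) : D₂ D = D₁ D := by
  funext x y z w a b
  simp only [D₂, D₁, hD, smul_smul, mul_inv_cancel₀ (two_ne_zero (α := ℂ)), one_smul]

section Limits

variable {X Y ι : Type*} [AddCommGroup X] [Module ℂ X] [AddCommGroup Y] [Module ℂ Y]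
  [TopologicalSpace Y] [IsTopologicalAddGroup Y] [ContinuousConstSMul ℂ Y] {l : Filter ι}
  {g : ι → X → X → X → Y} {D : X → X → X → Y}

theorem tendsto_D₁ (h : ∀ x z a, Tendsto (fun i => g i x z a) l (𝓝 (D x z a)))
    (x y z w a b : X) : Tendsto (fun i => D₁ (g i) x y z w a b) l (𝓝 (D₁ D x y z w a b)) :=
  (((((h _ _ _).add (h _ _ _)).sub ((h _ _ _).const_smul _)).add ((h _ _ _).const_smul _)).sub
    ((h _ _ _).const_smul _)).add ((h _ _ _).const_smul _)

theorem tendsto_D₂ (h : ∀ x z a, Tendsto (fun i => g i x z a) l (𝓝 (D x z a)))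
    (x y z w a b : X) : Tendsto (fun i => D₂ (g i) x y z w a b) l (𝓝 (D₂ D x y z w a b)) :=
  (((((((h _ _ _).const_smul _).add ((h _ _ _).const_smul _)).sub ((h _ _ _).const_smul _)).add
    ((h _ _ _).const_smul _)).sub ((h _ _ _).const_smul _)).add ((h _ _ _).const_smul _))

end Limits

section Hyers

variable {E F : Type*} [NormedAddCommGroup E] [NormedSpace ℂ E] [NormedAddCommGroup F]
  [NormedSpace ℂ F]

theorem two_pow_mul_norm_inv_two_pow_smul_rpow (n : ℕ) (r : ℝ) (u : E) :
    (2 : ℝ) ^ n * ‖(2 : ℂ)⁻¹ ^ n • u‖ ^ r = ((2 : ℝ) ^ (1 - r)) ^ n * ‖u‖ ^ r := by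
  rw [norm_smul, norm_pow, norm_inv, Complex.norm_ofNat,
    Real.mul_rpow (by positivity) (norm_nonneg u), ← Real.rpow_pow_comm (by norm_num),
    ← mul_assoc, ← mul_pow, Real.inv_rpow zero_le_two, Real.rpow_sub two_pos, Real.rpow_one,
    div_eq_mul_inv]

def TriJensenIneq (s : ℂ) (r θ : ℝ) (f : E → E → E → F) : Prop :=
  ∀ l m e : ℂ, ‖l‖ = 1 → ‖m‖ = 1 → ‖e‖ = 1 → ∀ x y z w a b : E,
    ‖(2 : ℂ) • f ((2 : ℂ)⁻¹ • (l • (x + y))) (m • (z - w)) (e • (a + b))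
        + (2 : ℂ) • f ((2 : ℂ)⁻¹ • (l • (x - y))) (m • (z + w)) (e • (a - b))
        - (l * m * e) • ((2 : ℂ) • f x z a - (2 : ℂ) • f x w b
            + (2 : ℂ) • f y z b - (2 : ℂ) • f y w a)‖
      ≤ ‖s • D₁ f x y z w a b‖
        + θ * (‖x‖ ^ r + ‖y‖ ^ r) * (‖z‖ ^ r + ‖w‖ ^ r) * (‖a‖ ^ r + ‖b‖ ^ r)

noncomputable def hyersSeq (f : E → E → E → F) (n : ℕ) (x z a : E) : F :=
  (2 : ℂ) ^ n • f ((2 : ℂ)⁻¹ ^ n • x) z a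

noncomputable def hyersLim (f : E → E → E → F) (x z a : E) : F :=
  limUnder atTop fun n => hyersSeq f n x z a

theorem hyersSeq_zero (f : E → E → E → F) : hyersSeq f 0 = f := by
  ext x z a
  simp [hyersSeq]

theorem two_pow_smul_D₁ (f : E → E → E → F) (n : ℕ) (x y z w a b : E) :
    (2 : ℂ) ^ n • D₁ f ((2 : ℂ)⁻¹ ^ n • x) ((2 : ℂ)⁻¹ ^ n • y) z w a b
      = D₁ (hyersSeq f n) x y z w a b := by
  rw [D₁, D₁, ← smul_add ((2 : ℂ)⁻¹ ^ n) x y, ← smul_sub ((2 : ℂ)⁻¹ ^ n) x y]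
  simp only [hyersSeq]
  module

theorem two_pow_smul_D₂ (f : E → E → E → F) (n : ℕ) (x y z w a b : E) :
    (2 : ℂ) ^ n • D₂ f ((2 : ℂ)⁻¹ ^ n • x) ((2 : ℂ)⁻¹ ^ n • y) z w a b
      = D₂ (hyersSeq f n) x y z w a b := by
  rw [D₂, D₂, ← smul_add ((2 : ℂ)⁻¹ ^ n) x y, ← smul_sub ((2 : ℂ)⁻¹ ^ n) x y,
    smul_comm (2 : ℂ)⁻¹ _ (x + y), smul_comm (2 : ℂ)⁻¹ _ (x - y)]
  simp only [hyersSeq]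
  module

theorem hyersLim_inv_two_smul {f : E → E → E → F} {x z a : E}
    (h : Tendsto (fun n => hyersSeq f n x z a) atTop (𝓝 (hyersLim f x z a))) :
    hyersLim f ((2 : ℂ)⁻¹ • x) z a = (2 : ℂ)⁻¹ • hyersLim f x z a := by
  have hshift : (fun n => hyersSeq f n ((2 : ℂ)⁻¹ • x) z a)
      = fun n => (2 : ℂ)⁻¹ • hyersSeq f (n + 1) x z a := by
    funext n
    rw [hyersSeq, hyersSeq, smul_smul, ← pow_succ, smul_smul, pow_succ' (2 : ℂ),
      inv_mul_cancel_left₀ two_ne_zero]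
  rw [hyersLim, hshift]
  exact ((h.comp (tendsto_add_atTop_nat 1)).const_smul _).limUnder_eq

namespace TriJensenIneq

variable {s : ℂ} {r θ : ℝ} {f : E → E → E → F}

theorem norm_two_smul_half_sub_le (hf : TriJensenIneq s r θ f) (hr : 0 < r)
    (hzero : ∀ x z a, f x 0 a = 0 ∧ f 0 z a = 0 ∧ f x z 0 = 0) {l m e : ℂ} (hl : ‖l‖ = 1)
    (hm : ‖m‖ = 1) (he : ‖e‖ = 1) (x z a : E) :
    ‖(2 : ℂ) • f ((2 : ℂ)⁻¹ • (l • x)) (m • z) (e • a) - (l * m * e) • f x z a‖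
      ≤ θ / 2 * (‖x‖ ^ r * ‖z‖ ^ r * ‖a‖ ^ r) := by
  have h := hf l m e hl hm he x 0 z 0 a 0
  simp only [D₁, add_zero, sub_zero, (hzero x 0 0).1, (hzero 0 z 0).2.1, (hzero 0 0 a).1,
    smul_zero, norm_zero, Real.zero_rpow hr.ne'] at h
  rw [show (2 : ℂ) • f ((2 : ℂ)⁻¹ • (l • x)) (m • z) (e • a)
      + (2 : ℂ) • f ((2 : ℂ)⁻¹ • (l • x)) (m • z) (e • a) - (l * m * e) • ((2 : ℂ) • f x z a)
      = (2 : ℂ) • ((2 : ℂ) • f ((2 : ℂ)⁻¹ • (l • x)) (m • z) (e • a) - (l * m * e) • f x z a)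
      by module, norm_smul, Complex.norm_ofNat] at h
  rw [← two_smul ℂ (f x z a), sub_self, smul_zero, norm_zero, zero_add] at h
  linarith

theorem norm_hyersSeq_succ_sub_le (hf : TriJensenIneq s r θ f) (hr : 0 < r)
    (hzero : ∀ x z a, f x 0 a = 0 ∧ f 0 z a = 0 ∧ f x z 0 = 0) {l m e : ℂ} (hl : ‖l‖ = 1)
    (hm : ‖m‖ = 1) (he : ‖e‖ = 1) (n : ℕ) (x z a : E) :
    ‖hyersSeq f (n + 1) (l • x) (m • z) (e • a) - (l * m * e) • hyersSeq f n x z a‖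
      ≤ θ / 2 * (‖x‖ ^ r * ‖z‖ ^ r * ‖a‖ ^ r) * ((2 : ℝ) ^ (1 - r)) ^ n := by
  have harg : (2 : ℂ)⁻¹ ^ (n + 1) • (l • x) = (2 : ℂ)⁻¹ • (l • ((2 : ℂ)⁻¹ ^ n • x)) := by
    module
  calc _ = (2 : ℝ) ^ n * ‖(2 : ℂ) • f ((2 : ℂ)⁻¹ • (l • ((2 : ℂ)⁻¹ ^ n • x))) (m • z) (e • a)
        - (l * m * e) • f ((2 : ℂ)⁻¹ ^ n • x) z a‖ := by
        rw [hyersSeq, hyersSeq, harg, ← Complex.norm_ofNat, ← norm_pow, ← norm_smul]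
        congr 1
        module
    _ ≤ (2 : ℝ) ^ n * (θ / 2 * (‖(2 : ℂ)⁻¹ ^ n • x‖ ^ r * ‖z‖ ^ r * ‖a‖ ^ r)) := by
        gcongr
        exact hf.norm_two_smul_half_sub_le hr hzero hl hm he _ z a
    _ = _ := by
        linear_combination (θ / 2 * (‖z‖ ^ r * ‖a‖ ^ r)) *
          two_pow_mul_norm_inv_two_pow_smul_rpow n r x

theorem dist_hyersSeq_le (hf : TriJensenIneq s r θ f) (hr : 0 < r)
    (hzero : ∀ x z a, f x 0 a = 0 ∧ f 0 z a = 0 ∧ f x z 0 = 0) (x z a : E) (n : ℕ) :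
    dist (hyersSeq f n x z a) (hyersSeq f (n + 1) x z a)
      ≤ θ / 2 * (‖x‖ ^ r * ‖z‖ ^ r * ‖a‖ ^ r) * ((2 : ℝ) ^ (1 - r)) ^ n := by
  simpa [dist_eq_norm'] using
    hf.norm_hyersSeq_succ_sub_le hr hzero norm_one norm_one norm_one n x z a

theorem norm_D₂_le (hf : TriJensenIneq s r θ f) (x y z w a b : E) :
    ‖D₂ f x y z w a b‖ ≤ ‖s • D₁ f x y z w a b‖
      + θ * (‖x‖ ^ r + ‖y‖ ^ r) * (‖z‖ ^ r + ‖w‖ ^ r) * (‖a‖ ^ r + ‖b‖ ^ r) := by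
  have h := hf 1 1 1 norm_one norm_one norm_one x y z w a b
  simp only [one_smul, mul_one] at h
  convert h using 2
  rw [D₂]
  abel

theorem norm_D₂_hyersSeq_le (hf : TriJensenIneq s r θ f) (n : ℕ) (x y z w a b : E) :
    ‖D₂ (hyersSeq f n) x y z w a b‖ ≤ ‖s • D₁ (hyersSeq f n) x y z w a b‖
      + θ * (‖x‖ ^ r + ‖y‖ ^ r) * (‖z‖ ^ r + ‖w‖ ^ r) * (‖a‖ ^ r + ‖b‖ ^ r)
        * ((2 : ℝ) ^ (1 - r)) ^ n := by
  set x' := (2 : ℂ)⁻¹ ^ n • x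
  set y' := (2 : ℂ)⁻¹ ^ n • y
  have h2n : ‖(2 : ℂ) ^ n‖ = 2 ^ n := by simp
  calc _ = 2 ^ n * ‖D₂ f x' y' z w a b‖ := by rw [← two_pow_smul_D₂, norm_smul, h2n]
    _ ≤ 2 ^ n * (‖s • D₁ f x' y' z w a b‖
          + θ * (‖x'‖ ^ r + ‖y'‖ ^ r) * (‖z‖ ^ r + ‖w‖ ^ r) * (‖a‖ ^ r + ‖b‖ ^ r)) := by
        gcongr
        exact hf.norm_D₂_le x' y' z w a b
    _ = _ := by
        rw [← two_pow_smul_D₁, smul_comm, norm_smul ((2 : ℂ) ^ n), h2n]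
        linear_combination (θ * (‖z‖ ^ r + ‖w‖ ^ r) * (‖a‖ ^ r + ‖b‖ ^ r)) *
          (two_pow_mul_norm_inv_two_pow_smul_rpow n r x +
            two_pow_mul_norm_inv_two_pow_smul_rpow n r y)

variable [CompleteSpace F]

theorem tendsto_hyersSeq (hf : TriJensenIneq s r θ f) (hr : 1 < r)
    (hzero : ∀ x z a, f x 0 a = 0 ∧ f 0 z a = 0 ∧ f x z 0 = 0) (x z a : E) :
    Tendsto (fun n => hyersSeq f n x z a) atTop (𝓝 (hyersLim f x z a)) :=
  (cauchySeq_of_le_geometric _ _ (two_rpow_one_sub_lt_one hr)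
    (hf.dist_hyersSeq_le (by linarith) hzero x z a)).tendsto_limUnder

theorem norm_sub_hyersLim_le (hf : TriJensenIneq s r θ f) (hr : 1 < r)
    (hzero : ∀ x z a, f x 0 a = 0 ∧ f 0 z a = 0 ∧ f x z 0 = 0) (x z a : E) :
    ‖f x z a - hyersLim f x z a‖
      ≤ (2 : ℝ) ^ r * θ / (2 * ((2 : ℝ) ^ r - 2)) * (‖x‖ ^ r * ‖z‖ ^ r * ‖a‖ ^ r) := by
  have h := dist_le_of_le_geometric_of_tendsto₀ _ _ (two_rpow_one_sub_lt_one hr)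
    (hf.dist_hyersSeq_le (by linarith) hzero x z a) (hf.tendsto_hyersSeq hr hzero x z a)
  rw [hyersSeq_zero, dist_eq_norm] at h
  -- `θ/2 · ∑ₙ (2^(1-r))ⁿ = 2^r θ / (2 (2^r - 2))`
  refine h.trans_eq ?_
  have h2r : (2 : ℝ) < 2 ^ r := by
    simpa using Real.rpow_lt_rpow_of_exponent_lt one_lt_two hr
  rw [Real.rpow_sub two_pos, Real.rpow_one]
  field_simp

theorem hyersLim_smul_smul_smul (hf : TriJensenIneq s r θ f) (hr : 1 < r)
    (hzero : ∀ x z a, f x 0 a = 0 ∧ f 0 z a = 0 ∧ f x z 0 = 0) {l m e : ℂ} (hl : ‖l‖ = 1)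
    (hm : ‖m‖ = 1) (he : ‖e‖ = 1) (x z a : E) :
    hyersLim f (l • x) (m • z) (e • a) = (l * m * e) • hyersLim f x z a := by
  rw [← sub_eq_zero]
  exact eq_zero_of_tendsto_of_norm_le_geometric
    (((hf.tendsto_hyersSeq hr hzero _ _ _).comp (tendsto_add_atTop_nat 1)).sub
      ((hf.tendsto_hyersSeq hr hzero x z a).const_smul (l * m * e)))
    (by positivity) (two_rpow_one_sub_lt_one hr)
    (hf.norm_hyersSeq_succ_sub_le (by linarith) hzero hl hm he · x z a)

theorem D₁_hyersLim_eq_zero (hf : TriJensenIneq s r θ f) (hs : ‖s‖ < 1) (hr : 1 < r)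
    (hzero : ∀ x z a, f x 0 a = 0 ∧ f 0 z a = 0 ∧ f x z 0 = 0) (x y z w a b : E) :
    D₁ (hyersLim f) x y z w a b = 0 := by
  -- In the limit the θ-term vanishes, and `D₂ = D₁` as the limit is `2⁻¹`-homogeneous in `x`.
  have hlim := hf.tendsto_hyersSeq hr hzero
  have hle : ‖D₂ (hyersLim f) x y z w a b‖ ≤ ‖s • D₁ (hyersLim f) x y z w a b‖ := by
    have hgeom := (tendsto_pow_atTop_nhds_zero_of_lt_one (by positivity)
      (two_rpow_one_sub_lt_one hr)).const_mul
        (θ * (‖x‖ ^ r + ‖y‖ ^ r) * (‖z‖ ^ r + ‖w‖ ^ r) * (‖a‖ ^ r + ‖b‖ ^ r))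
    refine le_of_tendsto_of_tendsto' (tendsto_D₂ hlim x y z w a b).norm ?_
      (hf.norm_D₂_hyersSeq_le · x y z w a b)
    simpa using ((tendsto_D₁ hlim x y z w a b).const_smul s).norm.add hgeom
  rw [D₂_eq_D₁_of_map_inv_two_smul (fun x z a => hyersLim_inv_two_smul (hlim x z a)),
    norm_smul] at hle
  exact norm_le_zero_iff.mp (by nlinarith [norm_nonneg (D₁ (hyersLim f) x y z w a b)])

theorem ctrilinear_hyersLim (hf : TriJensenIneq s r θ f) (hs : ‖s‖ < 1) (hr : 1 < r)
    (hzero : ∀ x z a, f x 0 a = 0 ∧ f 0 z a = 0 ∧ f x z 0 = 0) : CTrilinear (hyersLim f) :=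
  ctrilinear_of_D₁_eq_zero (hf.D₁_hyersLim_eq_zero hs hr hzero)
    fun _ _ _ hl hm he => hf.hyersLim_smul_smul_smul hr hzero hl hm he

end TriJensenIneq

end Hyers

section Approximation

variable {E F : Type*} [NormedAddCommGroup E] [NormedSpace ℂ E] [NormedAddCommGroup F]
  [NormedSpace ℂ F] {r C : ℝ} {f D D' : E → E → E → F}

theorem CTrilinear.eq_of_norm_sub_le (hD : CTrilinear D) (hD' : CTrilinear D') (hr : 1 < r)
    (h : ∀ x z a, ‖D x z a - D' x z a‖ ≤ C * (‖x‖ ^ r * ‖z‖ ^ r * ‖a‖ ^ r)) : D = D' := by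
  funext x z a
  rw [← sub_eq_zero]
  refine eq_zero_of_tendsto_of_norm_le_geometric tendsto_const_nhds (by positivity)
    (two_rpow_one_sub_lt_one hr) (C := C * (‖x‖ ^ r * ‖z‖ ^ r * ‖a‖ ^ r)) fun n => ?_
  set x' := (2 : ℂ)⁻¹ ^ n • x
  have hscale : D x z a - D' x z a = (2 : ℂ) ^ n • (D x' z a - D' x' z a) := by
    rw [hD.2.1, hD'.2.1, ← smul_sub, smul_smul, ← mul_pow, mul_inv_cancel₀ two_ne_zero,
      one_pow, one_smul]
  calc ‖D x z a - D' x z a‖ = 2 ^ n * ‖D x' z a - D' x' z a‖ := by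
        rw [hscale, norm_smul, norm_pow, Complex.norm_ofNat]
    _ ≤ 2 ^ n * (C * (‖x'‖ ^ r * ‖z‖ ^ r * ‖a‖ ^ r)) := by gcongr; exact h x' z a
    _ = _ := by
        linear_combination (C * (‖z‖ ^ r * ‖a‖ ^ r)) *
          two_pow_mul_norm_inv_two_pow_smul_rpow n r x

theorem CTrilinear.eq_of_approx (hD : CTrilinear D) (hD' : CTrilinear D') (hr : 1 < r)
    (hfD : ∀ x z a, ‖f x z a - D x z a‖ ≤ C * (‖x‖ ^ r * ‖z‖ ^ r * ‖a‖ ^ r))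
    (hfD' : ∀ x z a, ‖f x z a - D' x z a‖ ≤ C * (‖x‖ ^ r * ‖z‖ ^ r * ‖a‖ ^ r)) : D = D' :=
  hD.eq_of_norm_sub_le hD' hr (C := 2 * C) fun x z a => by
    have h := norm_sub_le (f x z a - D' x z a) (f x z a - D x z a)
    rw [sub_sub_sub_cancel_left] at h
    linarith [hfD x z a, hfD' x z a]

theorem CTrilinear.tendsto_two_pow_cube_smul (hD : CTrilinear D) (hr : 1 < r)
    (hfD : ∀ x z a, ‖f x z a - D x z a‖ ≤ C * (‖x‖ ^ r * ‖z‖ ^ r * ‖a‖ ^ r)) (x z a : E) :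
    Tendsto (fun n => ((2 : ℂ) ^ n) ^ 3 • f ((2 : ℂ)⁻¹ ^ n • x) ((2 : ℂ)⁻¹ ^ n • z)
      ((2 : ℂ)⁻¹ ^ n • a)) atTop (𝓝 (D x z a)) := by
  have hq := two_rpow_one_sub_lt_one hr
  rw [tendsto_iff_norm_sub_tendsto_zero]
  refine squeeze_zero (g := fun n => C * (‖x‖ ^ r * ‖z‖ ^ r * ‖a‖ ^ r)
    * (((2 : ℝ) ^ (1 - r)) ^ 3) ^ n) (fun _ => norm_nonneg _) (fun n => ?_) (by
      simpa using (tendsto_pow_atTop_nhds_zero_of_lt_one (by positivity)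
        (pow_lt_one₀ (by positivity) hq three_ne_zero)).const_mul _)
  set c := (2 : ℂ)⁻¹ ^ n
  have hscale : ((2 : ℂ) ^ n) ^ 3 • f (c • x) (c • z) (c • a) - D x z a
      = ((2 : ℂ) ^ n) ^ 3 • (f (c • x) (c • z) (c • a) - D (c • x) (c • z) (c • a)) := by
    have h2c : (2 : ℂ) ^ n * c = 1 := by rw [← mul_pow, mul_inv_cancel₀ two_ne_zero, one_pow]
    rw [hD.2.1, hD.2.2.1, hD.2.2.2, smul_sub, smul_smul, smul_smul, smul_smul,
      show ((2 : ℂ) ^ n) ^ 3 * c * c * c = 1 by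
        linear_combination ((2 ^ n * c) ^ 2 + 2 ^ n * c + 1) * h2c, one_smul]
  rw [hscale, norm_smul, norm_pow, norm_pow, Complex.norm_ofNat]
  calc _ ≤ ((2 : ℝ) ^ n) ^ 3 * (C * (‖c • x‖ ^ r * ‖c • z‖ ^ r * ‖c • a‖ ^ r)) := by
        gcongr; exact hfD _ _ _
    _ = C * ((2 ^ n * ‖c • x‖ ^ r) * (2 ^ n * ‖c • z‖ ^ r) * (2 ^ n * ‖c • a‖ ^ r)) := by ring
    _ = _ := by
        simp only [c, two_pow_mul_norm_inv_two_pow_smul_rpow]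
        ring

theorem CTrilinear.map_perm_of_approx (hD : CTrilinear D) (hr : 1 < r)
    (hfD : ∀ x z a, ‖f x z a - D x z a‖ ≤ C * (‖x‖ ^ r * ‖z‖ ^ r * ‖a‖ ^ r)) {θ : ℝ}
    (hperm : ∀ (σ : Equiv.Perm (Fin 3)) (x : Fin 3 → E),
      ‖f (x (σ 0)) (x (σ 1)) (x (σ 2)) - f (x 0) (x 1) (x 2)‖
        ≤ θ * ‖x 0‖ ^ r * ‖x 1‖ ^ r * ‖x 2‖ ^ r)
    (σ : Equiv.Perm (Fin 3)) (x : Fin 3 → E) :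
    D (x (σ 0)) (x (σ 1)) (x (σ 2)) = D (x 0) (x 1) (x 2) := by
  rw [← sub_eq_zero]
  refine eq_zero_of_tendsto_of_norm_le_geometric ((hD.tendsto_two_pow_cube_smul hr hfD _ _ _).sub
    (hD.tendsto_two_pow_cube_smul hr hfD _ _ _)) (by positivity)
    (pow_lt_one₀ (by positivity) (two_rpow_one_sub_lt_one hr) three_ne_zero)
    (C := θ * ‖x 0‖ ^ r * ‖x 1‖ ^ r * ‖x 2‖ ^ r) fun n => ?_
  set x' : Fin 3 → E := fun i => (2 : ℂ)⁻¹ ^ n • x i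
  rw [← smul_sub, norm_smul, norm_pow, norm_pow, Complex.norm_ofNat]
  calc _ ≤ ((2 : ℝ) ^ n) ^ 3 * (θ * ‖x' 0‖ ^ r * ‖x' 1‖ ^ r * ‖x' 2‖ ^ r) := by
        gcongr; exact hperm σ x'
    _ = θ * ((2 ^ n * ‖x' 0‖ ^ r) * (2 ^ n * ‖x' 1‖ ^ r) * (2 ^ n * ‖x' 2‖ ^ r)) := by ring
    _ = _ := by
        simp only [x', two_pow_mul_norm_inv_two_pow_smul_rpow]
        ring

end Approximation

theorem map_mul_of_tendsto_hyersSeq {R : Type*} [NormedRing R] [NormedAlgebra ℂ R]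
    {f D : R → R → R → R} {r θ : ℝ}
    (hD : ∀ x z a, Tendsto (fun n => hyersSeq f n x z a) atTop (𝓝 (D x z a))) (hr : 2 < r)
    (hder : ∀ x y z a : R, ‖f (x * y) z a - f x z a * y - x * f y z a‖
      ≤ θ * (‖x‖ ^ r + ‖y‖ ^ r) * ‖z‖ ^ r * ‖a‖ ^ r)
    (x y z a : R) : D (x * y) z a = D x z a * y + x * D y z a := by
  -- Scaling `x` and `y` by `2⁻ⁿ` scales `x * y` by `4⁻ⁿ`, whence the index `2 * n`.
  rw [← sub_eq_zero, ← sub_sub]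
  have hlim : Tendsto (fun n => hyersSeq f (2 * n) (x * y) z a - hyersSeq f n x z a * y
      - x * hyersSeq f n y z a) atTop (𝓝 (D (x * y) z a - D x z a * y - x * D y z a)) :=
    (((hD _ _ _).comp (tendsto_id.const_mul_atTop' two_pos)).sub ((hD x z a).mul_const y)).sub
      ((hD y z a).const_mul x)
  have hq : 2 * (2 : ℝ) ^ (1 - r) < 1 := by
    rw [← Real.rpow_one_add' zero_le_two (by linarith)]
    exact Real.rpow_lt_one_of_one_lt_of_neg one_lt_two (by linarith)
  refine eq_zero_of_tendsto_of_norm_le_geometric hlim (by positivity) hq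
    (C := θ * (‖x‖ ^ r + ‖y‖ ^ r) * ‖z‖ ^ r * ‖a‖ ^ r) fun n => ?_
  set x' := (2 : ℂ)⁻¹ ^ n • x
  set y' := (2 : ℂ)⁻¹ ^ n • y
  have hscale : hyersSeq f (2 * n) (x * y) z a - hyersSeq f n x z a * y - x * hyersSeq f n y z a
      = ((2 : ℂ) ^ n) ^ 2 • (f (x' * y') z a - f x' z a * y' - x' * f y' z a) := by
    have h2c : (2 : ℂ) ^ n * (2 : ℂ)⁻¹ ^ n = 1 := by
      rw [← mul_pow, mul_inv_cancel₀ two_ne_zero, one_pow]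
    rw [smul_mul_smul_comm, ← pow_add, ← two_mul]
    simp only [hyersSeq, smul_mul_assoc, mul_smul_comm, smul_sub, smul_smul, x', y']
    rw [pow_mul', show ((2 : ℂ) ^ n) ^ 2 * (2 : ℂ)⁻¹ ^ n = 2 ^ n by
      linear_combination 2 ^ n * h2c]
  rw [hscale, norm_smul, norm_pow, norm_pow, Complex.norm_ofNat]
  calc _ ≤ ((2 : ℝ) ^ n) ^ 2 * (θ * (‖x'‖ ^ r + ‖y'‖ ^ r) * ‖z‖ ^ r * ‖a‖ ^ r) := by
        gcongr; exact hder x' y' z a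
    _ = _ := by
        linear_combination θ * ‖z‖ ^ r * ‖a‖ ^ r * 2 ^ n *
          (two_pow_mul_norm_inv_two_pow_smul_rpow n r x +
            two_pow_mul_norm_inv_two_pow_smul_rpow n r y)

theorem stmt_9_general (s : ℂ) (hs1 : ‖s‖ < 1) (r θ : ℝ) (hr : 2 < r)
    (f : A → A → A → A)
    (hzero : ∀ x z a : A, f x 0 a = 0 ∧ f 0 z a = 0 ∧ f x z 0 = 0)
    (hineq : ∀ l m e : ℂ, ‖l‖ = 1 → ‖m‖ = 1 → ‖e‖ = 1 → ∀ x y z w a b : A,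
      ‖(2 : ℂ) • f ((2 : ℂ)⁻¹ • (l • (x + y))) (m • (z - w)) (e • (a + b))
          + (2 : ℂ) • f ((2 : ℂ)⁻¹ • (l • (x - y))) (m • (z + w)) (e • (a - b))
          - (l * m * e) • ((2 : ℂ) • f x z a - (2 : ℂ) • f x w b
              + (2 : ℂ) • f y z b - (2 : ℂ) • f y w a)‖
        ≤ ‖s • D₁ f x y z w a b‖ + θ * (‖x‖ ^ r + ‖y‖ ^ r) * (‖z‖ ^ r + ‖w‖ ^ r) * (‖a‖ ^ r + ‖b‖ ^ r)) :
    (∃! D : A → A → A → A, CTrilinear D ∧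
      ∀ x z a : A, ‖f x z a - D x z a‖ ≤ (2 : ℝ) ^ r * θ / (2 * ((2 : ℝ) ^ r - 2)) * (‖x‖ ^ r * ‖z‖ ^ r * ‖a‖ ^ r)) ∧
    ((∀ x y z a : A,
      ‖f (x * y) z a - f x z a * y - x * f y z a‖
        ≤ θ * (‖x‖ ^ r + ‖y‖ ^ r) * ‖z‖ ^ r * ‖a‖ ^ r) →
     (∀ (σ : Equiv.Perm (Fin 3)) (x : Fin 3 → A),
      ‖f (x (σ 0)) (x (σ 1)) (x (σ 2)) - f (x 0) (x 1) (x 2)‖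
        ≤ θ * ‖x 0‖ ^ r * ‖x 1‖ ^ r * ‖x 2‖ ^ r) →
     ∀ D : A → A → A → A,
       (CTrilinear D ∧ ∀ x z a : A, ‖f x z a - D x z a‖ ≤ (2 : ℝ) ^ r * θ / (2 * ((2 : ℝ) ^ r - 2)) * (‖x‖ ^ r * ‖z‖ ^ r * ‖a‖ ^ r)) →
       PermutingTriderivation D) := by
  have hr₁ : 1 < r := by linarith
  have hf : TriJensenIneq s r θ f := hineq
  have hT := hf.ctrilinear_hyersLim hs1 hr₁ hzero
  have hB := hf.norm_sub_hyersLim_le hr₁ hzero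
  have huniq : ∀ D : A → A → A → A, CTrilinear D ∧ (∀ x z a : A, ‖f x z a - D x z a‖
      ≤ (2 : ℝ) ^ r * θ / (2 * ((2 : ℝ) ^ r - 2)) * (‖x‖ ^ r * ‖z‖ ^ r * ‖a‖ ^ r)) →
      D = hyersLim f :=
    fun D hD => hD.1.eq_of_approx hT hr₁ hD.2 hB
  refine ⟨⟨hyersLim f, ⟨hT, hB⟩, huniq⟩, fun hder hperm D hD => ?_⟩
  obtain rfl := huniq D hD
  exact ⟨hT, map_mul_of_tendsto_hyersSeq (hf.tendsto_hyersSeq hr₁ hzero) hr hder,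
    hT.map_perm_of_approx hr₁ hB hperm⟩

theorem stmt_9 (s : ℂ) (hs0 : s ≠ 0) (hs1 : ‖s‖ < 1) (r θ : ℝ) (hr : 2 < r) (hθ : 0 ≤ θ)
    (f : A → A → A → A)
    (hzero : ∀ x z a : A, f x 0 a = 0 ∧ f 0 z a = 0 ∧ f x z 0 = 0)
    (hineq : ∀ l m e : ℂ, ‖l‖ = 1 → ‖m‖ = 1 → ‖e‖ = 1 → ∀ x y z w a b : A,
      ‖(2 : ℂ) • f ((2 : ℂ)⁻¹ • (l • (x + y))) (m • (z - w)) (e • (a + b))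
          + (2 : ℂ) • f ((2 : ℂ)⁻¹ • (l • (x - y))) (m • (z + w)) (e • (a - b))
          - (l * m * e) • ((2 : ℂ) • f x z a - (2 : ℂ) • f x w b
              + (2 : ℂ) • f y z b - (2 : ℂ) • f y w a)‖
        ≤ ‖s • D₁ f x y z w a b‖ + θ * (‖x‖ ^ r + ‖y‖ ^ r) * (‖z‖ ^ r + ‖w‖ ^ r) * (‖a‖ ^ r + ‖b‖ ^ r)) :
    (∃! D : A → A → A → A, CTrilinear D ∧
      ∀ x z a : A, ‖f x z a - D x z a‖ ≤ (2 : ℝ) ^ r * θ / (2 * ((2 : ℝ) ^ r - 2)) * (‖x‖ ^ r * ‖z‖ ^ r * ‖a‖ ^ r)) ∧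
    ((∀ x y z a : A,
      ‖f (x * y) z a - f x z a * y - x * f y z a‖
        ≤ θ * (‖x‖ ^ r + ‖y‖ ^ r) * ‖z‖ ^ r * ‖a‖ ^ r) →
     (∀ (σ : Equiv.Perm (Fin 3)) (x : Fin 3 → A),
      ‖f (x (σ 0)) (x (σ 1)) (x (σ 2)) - f (x 0) (x 1) (x 2)‖
        ≤ θ * ‖x 0‖ ^ r * ‖x 1‖ ^ r * ‖x 2‖ ^ r) →
     ∀ D : A → A → A → A,
       (CTrilinear D ∧ ∀ x z a : A, ‖f x z a - D x z a‖ ≤ (2 : ℝ) ^ r * θ / (2 * ((2 : ℝ) ^ r - 2)) * (‖x‖ ^ r * ‖z‖ ^ r * ‖a‖ ^ r)) →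
       PermutingTriderivation D) :=
  stmt_9_general s hs1 r θ hr f hzero hineq
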